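/- arXiv:1807.07503 — 2 statements merged into one kernel-verified Lean document; each statement's English description precedes it below -/
import Mathlib

section
/- (Gap projection identity used in the proof of Theorem 3.2(1b).) Let f be a Markov interval map, x ∈ E_f, and i ∈ {1,…,n} with â_{i,ι(x)} = 1. Then P_i − Σ_{j : a_{ij} = 1} S_{ij} S_{ij}* = T_i P_{e(x)} T_i*, which equals the rank-one orthogonal projection onto ℂ δ_z where z = (f|_{I_i})^{-1}(e(x)); in particular this gap projection is nonzero, and moreover Σ_{j : a_{ij} = 1} S_{ij} S_{ij}* ≠ 0. -/
open scoped Classical ENNReal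

noncomputable section

/-- Partition and branch data for a Markov interval map with `n` Markov
subintervals.  `cm j` is the point `c_j⁻` and `cp j` is `c_j⁺` (with
`cm 0 = cp 0 = c₀` and `cm n = cp n = c_n`).  `f` is the globally defined map,
`F j` is the branch of `f` on the `j`-th Markov interval (indexed by
`j = 0, …, n-1`, corresponding to the interval `I_{j+1}` of the paper) and
`F' j` is the derivative of that branch. -/
structure MarkovSystem (n : ℕ) where
  cm : ℕ → ℝ
  cp : ℕ → ℝ
  f : ℝ → ℝ
  F : ℕ → ℝ → ℝ
  F' : ℕ → ℝ → ℝ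
  two_le : 2 ≤ n
  cm_zero : cm 0 = cp 0
  cm_n : cm n = cp n
  cm_le_cp : ∀ j ≤ n, cm j ≤ cp j
  cp_lt_cm : ∀ j < n, cp j < cm (j + 1)

namespace MarkovSystem

variable {n : ℕ} (M : MarkovSystem n)

/-- The Markov interval `I_{j+1} = [c_j⁺, c_{j+1}⁻]` (for `j < n`). -/
def Ipart (j : ℕ) : Set ℝ := Set.Icc (M.cp j) (M.cm (j + 1))

/-- The escape interval `E_j = (c_j⁻, c_j⁺)` (for `1 ≤ j ≤ n-1`). -/
def Epart (j : ℕ) : Set ℝ := Set.Ioo (M.cm j) (M.cp j)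

/-- The ambient interval `I = [c₀, c_n]`. -/
def itv : Set ℝ := Set.Icc (M.cm 0) (M.cm n)

/-- The domain of `f`, namely `⋃_{j=1}^n I_j`. -/
def dom : Set ℝ := ⋃ j ∈ Finset.range n, M.Ipart j

/-- The set `Γ` of partition boundary points. -/
def Gamma : Set ℝ := {y | ∃ j ≤ n, y = M.cm j ∨ y = M.cp j}

/-- `q`-fold image of a set under `f`, applying `f` only where it is defined. -/
def iterImage : ℕ → Set ℝ → Set ℝ
  | 0, S => S
  | q + 1, S => M.f '' (iterImage q S ∩ M.dom)

/-- `f^k(x)` is defined, i.e. all earlier iterates lie in the domain. -/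
def definedUpTo (k : ℕ) (x : ℝ) : Prop := ∀ l < k, M.f^[l] x ∈ M.dom

/-- The orbit equivalence relation `R_f`. -/
def Rrel (x y : ℝ) : Prop :=
  ∃ p q : ℕ, M.definedUpTo p x ∧ M.definedUpTo q y ∧ M.f^[p] x = M.f^[q] y

/-- The generalized orbit `R_f(x)` of a point `x ∈ I`. -/
def Rclass (x : ℝ) : Set ℝ := {y | y ∈ M.itv ∧ M.Rrel x y}

/-- The maximal invariant set `Ω_f`. -/
def Omega : Set ℝ := {x | x ∈ M.itv ∧ ∀ k, M.f^[k] x ∈ M.dom}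

/-- The escape set `E_f = I \ Ω_f`. -/
def Esc : Set ℝ := M.itv \ M.Omega

/-- The regular set `Λ_f = Ω_f \ R_f(Γ)`. -/
def Lambda : Set ℝ := {x | x ∈ M.Omega ∧ ∀ γ ∈ M.Gamma, ¬ M.Rrel x γ}

/-- The escape time of a point of the escape set. -/
def tau (x : ℝ) : ℕ := sInf {k | M.f^[k] x ∉ M.dom}

/-- The final escape point `e(x) = f^{τ(x)}(x)`. -/
def e (x : ℝ) : ℝ := M.f^[M.tau x] x

/-- The transition-matrix condition `a_{ij} = 1`, i.e. `f(int I_i) ⊇ int I_j`. -/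
def trans (i j : ℕ) : Prop := interior (M.Ipart j) ⊆ M.F i '' interior (M.Ipart i)

/-- The escape-transition condition `â_{ik} = 1`, i.e. `int I_i ∩ f⁻¹(E_k) ≠ ∅`. -/
def ahat (i k : ℕ) : Prop := (interior (M.Ipart i) ∩ M.F i ⁻¹' M.Epart k).Nonempty

end MarkovSystem

/-- The defining properties (P1)-(P4) of a Markov interval map, together with the
compatibility of the global map `f` with the branches `F j`:  `f` agrees with `F j`
on `I_j` except possibly at a boundary point shared with an adjacent interval,
where `f` is given by one of the two adjacent branches. -/
structure IsMarkov {n : ℕ} (M : MarkovSystem n) : Prop where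
  compat₁ : ∀ j < n, ∀ x ∈ M.Ipart j, (∀ k < n, k ≠ j → x ∉ M.Ipart k) → M.f x = M.F j x
  compat₂ : ∀ x ∈ M.dom, ∃ j, j < n ∧ x ∈ M.Ipart j ∧ M.f x = M.F j x
  maps_into : ∀ j < n, M.F j '' M.Ipart j ⊆ M.itv
  onto : M.itv ⊆ ⋃ j ∈ Finset.range n, M.F j '' M.Ipart j
  markov : ∀ i < n, ∃ S T : Set ℕ, S ⊆ {j | j < n} ∧ T ⊆ {j | 1 ≤ j ∧ j < n} ∧
    M.F i '' M.Ipart i = (⋃ j ∈ S, M.Ipart j) ∪ (⋃ j ∈ T, M.Epart j)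
  deriv : ∀ i < n, ∀ x ∈ M.Ipart i, HasDerivWithinAt (M.F i) (M.F' i x) (M.Ipart i) x
  derivCont : ∀ i < n, ContinuousOn (M.F' i) (M.Ipart i)
  mono : ∀ i < n, StrictMonoOn (M.F i) (M.Ipart i) ∨ StrictAntiOn (M.F i) (M.Ipart i)
  expansive : ∃ b > 1, ∀ i < n, ∀ x ∈ M.Ipart i, b < |M.F' i x|
  aperiodic : ∀ i < n, ∃ q, M.dom ⊆ M.iterImage q (M.Ipart i)

namespace MarkovSystem

variable {n : ℕ} (M : MarkovSystem n)

/-- The Hilbert space `H_x = ℓ²(R_f(x))`. -/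
abbrev Hsp (x : ℝ) : Type _ := lp (fun _ : M.Rclass x => ℂ) 2

/-- The canonical orthonormal basis vector `δ_z` of `H_x`, for `z ∈ R_f(x)`. -/
def dvec {x : ℝ} (z : M.Rclass x) : M.Hsp x := lp.single 2 z 1

/-- `T` is the bounded operator `T_i` on `H_x`, determined on the basis by
`T_i δ_y = δ_{(f|_{I_i})⁻¹(y)}` if `y ∈ f(I_i)` and `T_i δ_y = 0` otherwise. -/
def IsBranchOp (x : ℝ) (i : ℕ) (T : M.Hsp x →L[ℂ] M.Hsp x) : Prop :=
  (∀ z w : M.Rclass x, (w : ℝ) ∈ M.Ipart i → M.F i w = (z : ℝ) →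
      T (M.dvec z) = M.dvec w) ∧
  (∀ z : M.Rclass x, (z : ℝ) ∉ M.F i '' M.Ipart i → T (M.dvec z) = 0)

/-- `Pe` is the rank-one orthogonal projection onto `ℂ δ_{e(x)}`. -/
def IsEscProj (x : ℝ) (Pe : M.Hsp x →L[ℂ] M.Hsp x) : Prop :=
  ∀ z : M.Rclass x, Pe (M.dvec z) = if (z : ℝ) = M.e x then M.dvec z else 0

end MarkovSystem

/-! The operators `T_i T_i*`, `S_ij S_ij*` and `T_i P_{e(x)} T_i*` all act diagonally on the basis
`δ_v` of `ℓ²(R_f(x))`: they keep `δ_v` exactly when `v ∈ I_i`, when moreover `f v ∈ I_j`, and when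
moreover `f v = e(x)`, respectively. The class `R_f(x)` of an escaping point avoids the forward-
invariant set `Γ ⊆ dom f` of partition points, so `f v` lies in at most one `I_j`, and by the
Markov property in one with `a_ij = 1` as soon as `f v ∈ dom f`; and `e(x)` is the only point of
`R_f(x)` outside `dom f`. So the gap keeps precisely `δ_z` with `f z = e(x)`. The sum is nonzero
since aperiodicity (P4) pulls a point of `R_f(x) ∩ dom f` back to some `v ∈ I_i ∩ R_f(x)` with `f
v ∈ dom f`. -/

open Set

lemma not_isGreatest_or_isLeast_of_Ioo_subset {α : Type*} [LinearOrder α] [DenselyOrdered α]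
    {S : Set α} {a b y : α} (hy : y ∈ Ioo a b) (hS : Ioo a b ⊆ S) :
    ¬ (IsGreatest S y ∨ IsLeast S y) := by
  rintro (h | h)
  · obtain ⟨c, hyc, hcb⟩ := exists_between hy.2
    exact (h.2 (hS ⟨hy.1.trans hyc, hcb⟩)).not_gt hyc
  · obtain ⟨c, hac, hcy⟩ := exists_between hy.1
    exact (h.2 (hS ⟨hac, hcy.trans hy.2⟩)).not_gt hcy

namespace MarkovSystem

section Partition

variable {n : ℕ} (M : MarkovSystem n)

lemma cp_lt_cm_of_lt {a b : ℕ} (hab : a < b) (hb : b ≤ n) : M.cp a < M.cm b := by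
  induction b with
  | zero => omega
  | succ b ih =>
    rcases Nat.lt_succ_iff_lt_or_eq.mp hab with h | rfl
    · exact (ih h (by omega)).trans_le
        ((M.cm_le_cp b (by omega)).trans (M.cp_lt_cm b (by omega)).le)
    · exact M.cp_lt_cm a (by omega)

lemma cm_le_cm {a b : ℕ} (hab : a ≤ b) (hb : b ≤ n) : M.cm a ≤ M.cm b := by
  rcases hab.lt_or_eq with h | rfl
  · exact (M.cm_le_cp a (by omega)).trans (M.cp_lt_cm_of_lt h hb).le
  · exact le_rfl

lemma cp_le_cp {a b : ℕ} (hab : a ≤ b) (hb : b ≤ n) : M.cp a ≤ M.cp b := by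
  rcases hab.lt_or_eq with h | rfl
  · exact (M.cp_lt_cm_of_lt h hb).le.trans (M.cm_le_cp b hb)
  · exact le_rfl

lemma cm_le_cp_of_le {a b : ℕ} (hab : a ≤ b) (hb : b ≤ n) : M.cm a ≤ M.cp b :=
  (M.cm_le_cm hab hb).trans (M.cm_le_cp b hb)

lemma cp_mem_Ipart {j : ℕ} (hj : j < n) : M.cp j ∈ M.Ipart j :=
  ⟨le_rfl, (M.cp_lt_cm j hj).le⟩

lemma cm_succ_mem_Ipart {j : ℕ} (hj : j < n) : M.cm (j + 1) ∈ M.Ipart j :=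
  ⟨(M.cp_lt_cm j hj).le, le_rfl⟩

lemma Ipart_subset_dom {j : ℕ} (hj : j < n) : M.Ipart j ⊆ M.dom :=
  fun _ hy => mem_biUnion (Finset.mem_range.mpr hj) hy

lemma mem_dom_iff {y : ℝ} : y ∈ M.dom ↔ ∃ j < n, y ∈ M.Ipart j := by
  simp [dom]

lemma Ipart_subset_itv {j : ℕ} (hj : j < n) : M.Ipart j ⊆ M.itv := fun _ hy =>
  ⟨M.cm_zero ▸ (M.cp_le_cp j.zero_le hj.le).trans hy.1, hy.2.trans (M.cm_le_cm hj le_rfl)⟩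

lemma Epart_disjoint_dom {k : ℕ} (hk : k ≤ n) : Disjoint (M.Epart k) M.dom := by
  refine Set.disjoint_left.mpr fun y hyE hyd => ?_
  obtain ⟨j, hj, hyI⟩ := M.mem_dom_iff.mp hyd
  rcases Nat.lt_or_ge j k with h | h
  · exact (hyI.2.trans (M.cm_le_cm h hk)).not_gt hyE.1
  · exact ((M.cp_le_cp h hj.le).trans hyI.1).not_gt hyE.2

lemma eq_of_mem_Epart_of_mem_Epart {k k' : ℕ} (hk : k ≤ n) (hk' : k' ≤ n) {y : ℝ}
    (h : y ∈ M.Epart k) (h' : y ∈ M.Epart k') : k = k' := by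
  by_contra hne
  rcases Nat.lt_or_gt_of_ne hne with hlt | hlt
  · exact (h'.1.trans h.2).not_ge (M.cp_lt_cm_of_lt hlt hk').le
  · exact (h.1.trans h'.2).not_ge (M.cp_lt_cm_of_lt hlt hk).le

lemma cp_mem_dom {j : ℕ} (hj : j < n) : M.cp j ∈ M.dom :=
  M.Ipart_subset_dom hj (M.cp_mem_Ipart hj)

lemma cm_mem_dom {j : ℕ} (hj : j ≤ n) : M.cm j ∈ M.dom := by
  rcases j with _ | j
  · rw [M.cm_zero]
    exact M.cp_mem_dom (by have := M.two_le; omega)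
  · exact M.Ipart_subset_dom (by omega) (M.cm_succ_mem_Ipart (by omega))

lemma Gamma_subset_dom : M.Gamma ⊆ M.dom := by
  rintro y ⟨j, hj, rfl | rfl⟩
  · exact M.cm_mem_dom hj
  · rcases hj.lt_or_eq with hj | rfl
    · exact M.cp_mem_dom hj
    · exact M.cm_n ▸ M.cm_mem_dom le_rfl

lemma itv_subset_of_dom_subset {S : Set ℝ} [S.OrdConnected] (h : M.dom ⊆ S) : M.itv ⊆ S :=
  S.Icc_subset (h (M.cm_mem_dom n.zero_le)) (h (M.cm_mem_dom le_rfl))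

lemma mem_Gamma_of_mem_Ipart_of_mem_Ipart {j k : ℕ} (hj : j < n) (hk : k < n) (hjk : j ≠ k)
    {y : ℝ} (hyj : y ∈ M.Ipart j) (hyk : y ∈ M.Ipart k) : y ∈ M.Gamma := by
  rcases Nat.lt_or_gt_of_ne hjk with h | h
  · have : y = M.cm (j + 1) := hyj.2.antisymm ((M.cm_le_cp_of_le h hk.le).trans hyk.1)
    exact ⟨j + 1, hj, Or.inl this⟩
  · have : y = M.cp j := ((hyk.2.trans (M.cm_le_cp_of_le h hj.le))).antisymm hyj.1
    exact ⟨j, hj.le, Or.inr this⟩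

lemma eq_endpoint_of_mem_Gamma {k : ℕ} (hk : k < n) {y : ℝ} (hg : y ∈ M.Gamma)
    (hy : y ∈ M.Ipart k) : y = M.cp k ∨ y = M.cm (k + 1) := by
  obtain ⟨j, hj, rfl | rfl⟩ := hg
  · rcases Nat.lt_or_ge k j with h | h
    · exact Or.inr (hy.2.antisymm (M.cm_le_cm h hj))
    · exact Or.inl ((M.cm_le_cp_of_le h hk.le).antisymm hy.1)
  · rcases Nat.lt_or_ge k j with h | h
    · exact Or.inr (hy.2.antisymm ((M.cm_le_cm h hj).trans (M.cm_le_cp j hj)))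
    · exact Or.inl ((M.cp_le_cp h hk.le).antisymm hy.1)

end Partition

variable {n : ℕ} {M : MarkovSystem n}

lemma F_injOn (hM : IsMarkov M) {i : ℕ} (hi : i < n) : InjOn (M.F i) (M.Ipart i) :=
  (hM.mono i hi).elim StrictMonoOn.injOn StrictAntiOn.injOn

lemma isGreatest_or_isLeast_image_endpoint (hM : IsMarkov M) {i : ℕ} (hi : i < n) {w : ℝ}
    (hw : w = M.cp i ∨ w = M.cm (i + 1)) :
    IsGreatest (M.F i '' M.Ipart i) (M.F i w) ∨ IsLeast (M.F i '' M.Ipart i) (M.F i w) := by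
  have hle := (M.cp_lt_cm i hi).le
  rcases hM.mono i hi with hmono | hanti <;> rcases hw with rfl | rfl
  · exact Or.inr (hmono.monotoneOn.map_isLeast (isLeast_Icc hle))
  · exact Or.inl (hmono.monotoneOn.map_isGreatest (isGreatest_Icc hle))
  · exact Or.inl (hanti.antitoneOn.map_isLeast (isLeast_Icc hle))
  · exact Or.inr (hanti.antitoneOn.map_isGreatest (isGreatest_Icc hle))

lemma mem_image_Ipart_cases (hM : IsMarkov M) {i : ℕ} (hi : i < n) {u : ℝ}
    (hu : u ∈ M.F i '' M.Ipart i) :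
    (∃ j < n, u ∈ M.Ipart j ∧ M.Ipart j ⊆ M.F i '' M.Ipart i) ∨
    (∃ k, 1 ≤ k ∧ k < n ∧ u ∈ M.Epart k ∧ M.Epart k ⊆ M.F i '' M.Ipart i) := by
  obtain ⟨S, T, hS, hT, hdec⟩ := hM.markov i hi
  rw [hdec] at hu ⊢
  rcases hu with hu | hu
  · obtain ⟨j, hjS, hyj⟩ := mem_iUnion₂.mp hu
    exact Or.inl ⟨j, hS hjS, hyj, subset_union_of_subset_left (subset_biUnion_of_mem hjS) _⟩
  · obtain ⟨k, hkT, hyk⟩ := mem_iUnion₂.mp hu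
    exact Or.inr ⟨k, (hT hkT).1, (hT hkT).2, hyk,
      subset_union_of_subset_right (subset_biUnion_of_mem hkT) _⟩

lemma exists_trans_of_mem_image_of_mem_dom (hM : IsMarkov M) {i : ℕ} (hi : i < n) {u : ℝ}
    (hu : u ∈ M.F i '' M.Ipart i) (hud : u ∈ M.dom) :
    ∃ j < n, M.trans i j ∧ u ∈ M.Ipart j := by
  rcases mem_image_Ipart_cases hM hi hu with ⟨j, hj, huj, hsub⟩ | ⟨k, -, hk, huk, -⟩
  · refine ⟨j, hj, fun y hy => ?_, huj⟩
    rw [Ipart, interior_Icc] at hy ⊢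
    obtain ⟨t, ht, rfl⟩ := hsub (Ioo_subset_Icc_self hy)
    refine ⟨t, ?_, rfl⟩
    by_contra ht'
    have hend : t ∈ ({M.cp i, M.cm (i + 1)} : Set ℝ) :=
      Icc_sdiff_Ioo_same (M.cp_lt_cm i hi).le ▸ ⟨ht, ht'⟩
    exact not_isGreatest_or_isLeast_of_Ioo_subset hy ((Ioo_subset_Icc_self).trans hsub)
      (isGreatest_or_isLeast_image_endpoint hM hi hend)
  · exact absurd hud (Set.disjoint_left.mp (M.Epart_disjoint_dom hk.le) huk)

lemma Epart_subset_image_of_ahat (hM : IsMarkov M) {i k : ℕ} (hi : i < n) (hk : k ≤ n)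
    (hai : M.ahat i k) : M.Epart k ⊆ M.F i '' M.Ipart i := by
  obtain ⟨w, hw, hwk⟩ := hai
  rcases mem_image_Ipart_cases hM hi (mem_image_of_mem _ (interior_subset hw)) with
    ⟨j, hj, hwj, -⟩ | ⟨k', -, hk', hwk', hsub⟩
  · exact absurd (M.Ipart_subset_dom hj hwj) (Set.disjoint_left.mp (M.Epart_disjoint_dom hk) hwk)
  · rwa [M.eq_of_mem_Epart_of_mem_Epart hk hk'.le hwk hwk']

lemma F_mem_Gamma (hM : IsMarkov M) {i : ℕ} (hi : i < n) {w : ℝ} (hw : w ∈ M.Ipart i)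
    (hg : w ∈ M.Gamma) : M.F i w ∈ M.Gamma := by
  have hext := isGreatest_or_isLeast_image_endpoint hM hi (M.eq_endpoint_of_mem_Gamma hi hg hw)
  rcases mem_image_Ipart_cases hM hi (mem_image_of_mem _ hw) with
    ⟨j, hj, hwj, hsub⟩ | ⟨_, -, -, hwk, hsub⟩
  · by_contra hng
    have hint : M.F i w ∈ Ioo (M.cp j) (M.cm (j + 1)) := by
      refine ⟨hwj.1.lt_of_ne fun h => hng ⟨j, hj.le, Or.inr h.symm⟩,
        hwj.2.lt_of_ne fun h => hng ⟨j + 1, hj, Or.inl h⟩⟩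
    exact not_isGreatest_or_isLeast_of_Ioo_subset hint ((Ioo_subset_Icc_self).trans hsub) hext
  · exact absurd hext (not_isGreatest_or_isLeast_of_Ioo_subset hwk hsub)

lemma f_eq_F (hM : IsMarkov M) {j : ℕ} (hj : j < n) {y : ℝ} (hy : y ∈ M.Ipart j)
    (hyg : y ∉ M.Gamma) : M.f y = M.F j y :=
  hM.compat₁ j hj y hy fun _ hk hkj hyk =>
    hyg (M.mem_Gamma_of_mem_Ipart_of_mem_Ipart hk hj hkj hyk hy)

lemma iterate_mem_Gamma (hM : IsMarkov M) {y : ℝ} (hy : y ∈ M.Gamma) (l : ℕ) :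
    M.f^[l] y ∈ M.Gamma := by
  induction l with
  | zero => exact hy
  | succ l ih =>
    obtain ⟨k, hk, hyk, hfk⟩ := hM.compat₂ _ (M.Gamma_subset_dom ih)
    rw [Function.iterate_succ_apply', hfk]
    exact F_mem_Gamma hM hk hyk ih

lemma definedUpTo_add {q r : ℕ} {y : ℝ} (hq : M.definedUpTo q y)
    (hr : M.definedUpTo r (M.f^[q] y)) : M.definedUpTo (q + r) y := by
  intro l hl
  by_cases hlq : l < q
  · exact hq l hlq
  · obtain ⟨k, rfl⟩ := Nat.exists_eq_add_of_le (not_lt.mp hlq)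
    rw [add_comm, Function.iterate_add_apply]
    exact hr k (by omega)

lemma definedUpTo_one {y : ℝ} (hy : y ∈ M.dom) : M.definedUpTo 1 y := by
  intro l hl
  obtain rfl : l = 0 := by omega
  exact hy

lemma exists_of_mem_iterImage {q : ℕ} {S : Set ℝ} {y : ℝ} (hy : y ∈ M.iterImage q S) :
    ∃ y₀ ∈ S, M.definedUpTo q y₀ ∧ M.f^[q] y₀ = y := by
  induction q generalizing y with
  | zero => exact ⟨y, hy, fun l hl => absurd hl (Nat.not_lt_zero l), rfl⟩
  | succ q ih =>
    obtain ⟨w, ⟨hw, hwd⟩, rfl⟩ := hy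
    obtain ⟨y₀, hy₀, hd, rfl⟩ := ih hw
    exact ⟨y₀, hy₀, definedUpTo_add hd (definedUpTo_one hwd),
      Function.iterate_succ_apply' _ _ _⟩

lemma Rrel.of_iterate {x u y : ℝ} {q : ℕ} (h : M.Rrel x u) (hy : M.definedUpTo q y)
    (hqy : M.f^[q] y = u) : M.Rrel x y := by
  obtain ⟨p, r, hp, hr, heq⟩ := h
  subst hqy
  exact ⟨p, q + r, hp, definedUpTo_add hy hr, by rw [heq, add_comm, Function.iterate_add_apply]⟩

lemma Rrel.apply {x u : ℝ} (h : M.Rrel x u) (hu : u ∈ M.dom) : M.Rrel x (M.f u) := by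
  obtain ⟨p, r, hp, hr, heq⟩ := h
  cases r with
  | zero =>
    refine ⟨p + 1, 0, definedUpTo_add hp (definedUpTo_one (heq ▸ hu)),
      fun l hl => absurd hl (Nat.not_lt_zero l), ?_⟩
    rw [Function.iterate_succ_apply', heq]
    rfl
  | succ r =>
    exact ⟨p, r, hp, fun l hl => hr (l + 1) (by omega), heq⟩

lemma definedUpTo_tau (x : ℝ) : M.definedUpTo (M.tau x) x :=
  fun _ hl => not_not.mp (Nat.notMem_of_lt_sInf hl)

lemma e_notMem_dom {x : ℝ} (hx : x ∈ M.Esc) : M.e x ∉ M.dom := by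
  have hne : ∃ k, M.f^[k] x ∉ M.dom := by
    simpa [Omega, hx.1] using hx.2
  exact Nat.sInf_mem hne

lemma rrel_e (x : ℝ) : M.Rrel x (M.e x) :=
  ⟨M.tau x, 0, definedUpTo_tau x, fun l hl => absurd hl (Nat.not_lt_zero l), rfl⟩

lemma not_rrel_of_forall_iterate_mem_dom {x y : ℝ} (hx : x ∈ M.Esc)
    (hy : ∀ k, M.f^[k] y ∈ M.dom) : ¬ M.Rrel x y := by
  rintro ⟨p, q, hp, -, heq⟩
  rcases le_or_gt p (M.tau x) with h | h
  · apply e_notMem_dom hx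
    rw [e, ← Nat.sub_add_cancel h, Function.iterate_add_apply, heq,
      ← Function.iterate_add_apply]
    exact hy _
  · exact e_notMem_dom hx (hp _ h)

lemma eq_e_of_rrel {x y : ℝ} (hx : x ∈ M.Esc) (h : M.Rrel x y) (hy : y ∉ M.dom) :
    y = M.e x := by
  obtain ⟨p, q, hp, hq, heq⟩ := h
  obtain rfl : q = 0 := by
    by_contra hq0
    exact hy (hq 0 (Nat.pos_of_ne_zero hq0))
  change M.f^[p] x = y at heq
  obtain rfl : p = M.tau x := by
    rcases lt_trichotomy p (M.tau x) with h | h | h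
    · exact absurd (heq ▸ definedUpTo_tau x p h) hy
    · exact h
    · exact absurd (hp _ h) (e_notMem_dom hx)
  exact heq.symm

lemma e_mem_itv (hM : IsMarkov M) {x : ℝ} (hx : x ∈ M.Esc) : M.e x ∈ M.itv := by
  rw [e]
  rcases Nat.eq_zero_or_eq_succ_pred (M.tau x) with h | h
  · rw [h]
    exact hx.1
  · rw [h, Function.iterate_succ_apply']
    obtain ⟨j, hj, hyj, hfj⟩ := hM.compat₂ _ (definedUpTo_tau x (M.tau x).pred (by omega))
    rw [hfj]
    exact hM.maps_into j hj (mem_image_of_mem _ hyj)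

lemma mem_Rclass_e (hM : IsMarkov M) {x : ℝ} (hx : x ∈ M.Esc) : M.e x ∈ M.Rclass x :=
  ⟨e_mem_itv hM hx, rrel_e x⟩

lemma notMem_dom_iff_eq_e {x y : ℝ} (hx : x ∈ M.Esc) (hy : y ∈ M.Rclass x) :
    y ∉ M.dom ↔ y = M.e x :=
  ⟨eq_e_of_rrel hx hy.2, fun h => h ▸ e_notMem_dom hx⟩

lemma notMem_Gamma_of_mem_Rclass (hM : IsMarkov M) {x y : ℝ} (hx : x ∈ M.Esc)
    (hy : y ∈ M.Rclass x) : y ∉ M.Gamma := fun hg =>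
  not_rrel_of_forall_iterate_mem_dom hx
    (fun k => M.Gamma_subset_dom (iterate_mem_Gamma hM hg k)) hy.2

lemma F_mem_Rclass (hM : IsMarkov M) {x : ℝ} (hx : x ∈ M.Esc) {i : ℕ} (hi : i < n) {v : ℝ}
    (hv : v ∈ M.Rclass x) (hvi : v ∈ M.Ipart i) : M.F i v ∈ M.Rclass x := by
  rw [← f_eq_F hM hi hvi (notMem_Gamma_of_mem_Rclass hM hx hv)]
  refine ⟨?_, hv.2.apply (M.Ipart_subset_dom hi hvi)⟩
  rw [f_eq_F hM hi hvi (notMem_Gamma_of_mem_Rclass hM hx hv)]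
  exact hM.maps_into i hi (mem_image_of_mem _ hvi)

lemma mem_Rclass_of_F_mem (hM : IsMarkov M) {x : ℝ} (hx : x ∈ M.Esc) {i : ℕ} (hi : i < n)
    {w : ℝ} (hw : w ∈ M.Ipart i) (hFw : M.F i w ∈ M.Rclass x) : w ∈ M.Rclass x := by
  have hwg : w ∉ M.Gamma := fun hg =>
    notMem_Gamma_of_mem_Rclass hM hx hFw (F_mem_Gamma hM hi hw hg)
  refine ⟨M.Ipart_subset_itv hi hw, hFw.2.of_iterate (q := 1)
    (definedUpTo_one (M.Ipart_subset_dom hi hw)) ?_⟩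
  exact f_eq_F hM hi hw hwg

section Operators

open scoped InnerProductSpace

variable {x : ℝ}

lemma dvec_apply (z w : M.Rclass x) : M.dvec z w = if w = z then 1 else 0 := by
  rw [dvec, lp.single_apply, Pi.single_apply]

lemma dvec_ne_zero (z : M.Rclass x) : M.dvec z ≠ 0 := by
  intro h
  simpa [h] using dvec_apply z z

lemma inner_dvec_left (z : M.Rclass x) (v : M.Hsp x) : ⟪M.dvec z, v⟫_ℂ = v z := by
  simp [dvec, lp.inner_single_left]

lemma ext_dvec {A B : M.Hsp x →L[ℂ] M.Hsp x} (h : ∀ z, A (M.dvec z) = B (M.dvec z)) :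
    A = B :=
  lp.ext_continuousLinearMap ENNReal.ofNat_ne_top fun z => ContinuousLinearMap.ext_ring (h z)

lemma IsBranchOp.inner_apply_dvec (hM : IsMarkov M) (hx : x ∈ M.Esc) {i : ℕ} (hi : i < n)
    {T : M.Hsp x →L[ℂ] M.Hsp x} (hT : M.IsBranchOp x i T) (u v : M.Rclass x) :
    ⟪T (M.dvec u), M.dvec v⟫_ℂ =
      if (v : ℝ) ∈ M.Ipart i ∧ M.F i v = u then 1 else 0 := by
  by_cases hu : (u : ℝ) ∈ M.F i '' M.Ipart i
  · obtain ⟨w, hw, hwu⟩ := hu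
    have hwR : w ∈ M.Rclass x := mem_Rclass_of_F_mem hM hx hi hw (hwu ▸ u.2)
    rw [hT.1 u ⟨w, hwR⟩ hw hwu, inner_dvec_left, dvec_apply]
    refine if_congr ⟨?_, ?_⟩ rfl rfl
    · rintro rfl
      exact ⟨hw, hwu⟩
    · rintro ⟨hv, hvu⟩
      exact Subtype.ext (F_injOn hM hi hw hv (hwu.trans hvu.symm))
  · rw [hT.2 u hu, inner_zero_left, if_neg]
    rintro ⟨hv, hvu⟩
    exact hu ⟨v, hv, hvu⟩

lemma IsBranchOp.adjoint_dvec_apply (hM : IsMarkov M) (hx : x ∈ M.Esc) {i : ℕ} (hi : i < n)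
    {T : M.Hsp x →L[ℂ] M.Hsp x} (hT : M.IsBranchOp x i T) (u v : M.Rclass x) :
    star T (M.dvec v) u = if (v : ℝ) ∈ M.Ipart i ∧ M.F i v = u then 1 else 0 := by
  rw [← inner_dvec_left, ContinuousLinearMap.star_eq_adjoint,
    ContinuousLinearMap.adjoint_inner_right, hT.inner_apply_dvec hM hx hi]

lemma IsBranchOp.adjoint_dvec_of_mem (hM : IsMarkov M) (hx : x ∈ M.Esc) {i : ℕ} (hi : i < n)
    {T : M.Hsp x →L[ℂ] M.Hsp x} (hT : M.IsBranchOp x i T) {v w : M.Rclass x}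
    (hv : (v : ℝ) ∈ M.Ipart i) (hvw : M.F i v = w) : star T (M.dvec v) = M.dvec w := by
  ext u
  rw [hT.adjoint_dvec_apply hM hx hi, dvec_apply]
  refine if_congr ⟨fun h => Subtype.ext (h.2.symm.trans hvw), ?_⟩ rfl rfl
  rintro rfl
  exact ⟨hv, hvw⟩

lemma IsBranchOp.adjoint_dvec_of_notMem (hM : IsMarkov M) (hx : x ∈ M.Esc) {i : ℕ}
    (hi : i < n) {T : M.Hsp x →L[ℂ] M.Hsp x} (hT : M.IsBranchOp x i T) {v : M.Rclass x}
    (hv : (v : ℝ) ∉ M.Ipart i) : star T (M.dvec v) = 0 := by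
  ext u
  rw [hT.adjoint_dvec_apply hM hx hi, if_neg fun h => hv h.1]
  rfl

def IsCoordProj (A : M.Hsp x →L[ℂ] M.Hsp x) (s : Set ℝ) : Prop :=
  ∀ v : M.Rclass x, A (M.dvec v) = if (v : ℝ) ∈ s then M.dvec v else 0

section IsCoordProj

variable {A B : M.Hsp x →L[ℂ] M.Hsp x} {s t : Set ℝ}

lemma isCoordProj_one : IsCoordProj (1 : M.Hsp x →L[ℂ] M.Hsp x) univ := fun v => by
  simp

lemma IsCoordProj.mul (hA : IsCoordProj A s) (hB : IsCoordProj B t) :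
    IsCoordProj (A * B) (s ∩ t) := by
  intro v
  by_cases ht : (v : ℝ) ∈ t <;> simp [hA v, hB v, ht]

lemma IsCoordProj.mul_self (hA : IsCoordProj A s) : IsCoordProj (A * A) s := by
  simpa using hA.mul hA

lemma IsCoordProj.sub (hA : IsCoordProj A s) (hB : IsCoordProj B t) (hts : t ⊆ s) :
    IsCoordProj (A - B) (s \ t) := by
  intro v
  by_cases ht : (v : ℝ) ∈ t
  · simp [hA v, hB v, ht, hts ht]
  · simp [hA v, hB v, ht]

lemma IsCoordProj.ite (p : Prop) [Decidable p] (hA : p → IsCoordProj A s) :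
    IsCoordProj (if p then A else 0) {v | p ∧ v ∈ s} := by
  by_cases hp : p
  · simpa [hp] using hA hp
  · intro v
    simp [hp]

lemma IsCoordProj.sum {ι : Type*} {F : Finset ι} {P : ι → M.Hsp x →L[ℂ] M.Hsp x}
    {S : ι → Set ℝ} (hP : ∀ j ∈ F, IsCoordProj (P j) (S j))
    (hS : (F : Set ι).PairwiseDisjoint fun j => S j ∩ M.Rclass x) :
    IsCoordProj (∑ j ∈ F, P j) (⋃ j ∈ F, S j) := by
  intro v
  rw [sum_apply]
  by_cases hv : ∃ j ∈ F, (v : ℝ) ∈ S j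
  · obtain ⟨j, hj, hvj⟩ := hv
    rw [Finset.sum_eq_single_of_mem j hj fun k hk hkj => ?_, hP j hj, if_pos hvj,
      if_pos (mem_iUnion₂.mpr ⟨j, hj, hvj⟩)]
    rw [hP k hk, if_neg fun hvk => hkj (hS.elim_set hk hj _ ⟨hvk, v.2⟩ ⟨hvj, v.2⟩)]
  · simp only [not_exists, not_and] at hv
    rw [Finset.sum_eq_zero fun j hj => by rw [hP j hj, if_neg (hv j hj)], if_neg]
    simpa using hv

lemma IsCoordProj.congr (hA : IsCoordProj A s) (hst : ∀ v ∈ M.Rclass x, v ∈ s ↔ v ∈ t) :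
    IsCoordProj A t := fun v => by
  rw [hA v, if_congr (hst v v.2) rfl rfl]

lemma IsCoordProj.eq (hA : IsCoordProj A s) (hB : IsCoordProj B s) : A = B :=
  ext_dvec fun v => by rw [hA v, hB v]

lemma IsCoordProj.ne_zero (hA : IsCoordProj A s) (v : M.Rclass x) (hv : (v : ℝ) ∈ s) :
    A ≠ 0 := fun h => dvec_ne_zero v (by simpa [h, hv] using (hA v).symm)

lemma IsCoordProj.apply_eq_ite {z : M.Rclass x} (hA : IsCoordProj A s)
    (hs : ∀ w : M.Rclass x, (w : ℝ) ∈ s ↔ w = z) (w : M.Rclass x) :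
    A (M.dvec w) = if w = z then M.dvec z else 0 := by
  rw [hA w, if_congr (hs w) rfl rfl]
  split_ifs with h
  · rw [h]
  · rfl

end IsCoordProj

lemma IsBranchOp.isCoordProj_conj (hM : IsMarkov M) (hx : x ∈ M.Esc) {i : ℕ} (hi : i < n)
    {T A : M.Hsp x →L[ℂ] M.Hsp x} (hT : M.IsBranchOp x i T) {s : Set ℝ}
    (hA : IsCoordProj A s) : IsCoordProj (T * A * star T) (M.Ipart i ∩ M.F i ⁻¹' s) := by
  intro v
  simp only [mul_apply_eq_comp]
  by_cases hv : (v : ℝ) ∈ M.Ipart i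
  · set w : M.Rclass x := ⟨M.F i v, F_mem_Rclass hM hx hi v.2 hv⟩
    rw [hT.adjoint_dvec_of_mem hM hx hi hv (w := w) rfl, hA w]
    by_cases hw : M.F i v ∈ s
    · rw [if_pos hw, hT.1 w v hv rfl, if_pos ⟨hv, hw⟩]
    · rw [if_neg hw, map_zero, if_neg fun h => hw h.2]
  · rw [hT.adjoint_dvec_of_notMem hM hx hi hv, map_zero, map_zero, if_neg fun h => hv h.1]

lemma IsBranchOp.isCoordProj_mul_star (hM : IsMarkov M) (hx : x ∈ M.Esc) {i : ℕ} (hi : i < n)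
    {T : M.Hsp x →L[ℂ] M.Hsp x} (hT : M.IsBranchOp x i T) :
    IsCoordProj (T * star T) (M.Ipart i) := by
  simpa using hT.isCoordProj_conj hM hx hi isCoordProj_one

lemma isCoordProj_sum_trans (hM : IsMarkov M) (hx : x ∈ M.Esc) {i : ℕ} (hi : i < n)
    {T : ℕ → M.Hsp x →L[ℂ] M.Hsp x} (hT : ∀ j < n, M.IsBranchOp x j (T j)) :
    IsCoordProj (∑ j ∈ Finset.range n, if M.trans i j then
        (T i * (T j * star (T j))) * star (T i * (T j * star (T j))) else 0)
      (M.Ipart i ∩ M.F i ⁻¹' M.dom) := by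
  have hterm : ∀ j ∈ Finset.range n, IsCoordProj (if M.trans i j then
      (T i * (T j * star (T j))) * star (T i * (T j * star (T j))) else 0)
      {v | M.trans i j ∧ v ∈ M.Ipart i ∩ M.F i ⁻¹' M.Ipart j} := by
    intro j hj
    refine IsCoordProj.ite _ fun _ => ?_
    have hP := ((hT j (Finset.mem_range.mp hj)).isCoordProj_mul_star hM hx
      (Finset.mem_range.mp hj)).mul_self
    rw [star_mul, (IsSelfAdjoint.mul_star_self (T j)).star_eq, ← mul_assoc, mul_assoc (T i)]
    exact (hT i hi).isCoordProj_conj hM hx hi hP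
  refine (IsCoordProj.sum hterm ?_).congr fun v _ => ?_
  · intro j hj k hk hjk
    refine Set.disjoint_left.mpr ?_
    rintro v ⟨⟨-, hvi, hvj⟩, hvR⟩ ⟨⟨-, -, hvk⟩, -⟩
    exact notMem_Gamma_of_mem_Rclass hM hx (F_mem_Rclass hM hx hi hvR hvi)
      (M.mem_Gamma_of_mem_Ipart_of_mem_Ipart (Finset.mem_range.mp hj)
        (Finset.mem_range.mp hk) hjk hvj hvk)
  · simp only [mem_iUnion₂, Finset.mem_range, mem_ofPred_eq, mem_inter_iff, mem_preimage]
    constructor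
    · rintro ⟨j, hj, -, hvi, hvj⟩
      exact ⟨hvi, M.Ipart_subset_dom hj hvj⟩
    · rintro ⟨hvi, hvd⟩
      obtain ⟨j, hj, htr, hvj⟩ :=
        exists_trans_of_mem_image_of_mem_dom hM hi (mem_image_of_mem _ hvi) hvd
      exact ⟨j, hj, htr, hvi, hvj⟩

lemma mem_Ipart_sdiff_iff (hM : IsMarkov M) (hx : x ∈ M.Esc) {i : ℕ} (hi : i < n) {v : ℝ}
    (hv : v ∈ M.Rclass x) :
    v ∈ M.Ipart i \ (M.Ipart i ∩ M.F i ⁻¹' M.dom) ↔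
      v ∈ M.Ipart i ∩ M.F i ⁻¹' {M.e x} := by
  simp only [mem_sdiff, mem_inter_iff, mem_preimage, mem_singleton_iff, not_and]
  exact and_congr_right fun hvi =>
    (imp_iff_right hvi).trans (notMem_dom_iff_eq_e hx (F_mem_Rclass hM hx hi hv hvi))

lemma exists_F_eq_e (hM : IsMarkov M) (hx : x ∈ M.Esc) {i k : ℕ} (hi : i < n) (hk : k ≤ n)
    (hex : M.e x ∈ M.Epart k) (hai : M.ahat i k) :
    ∃ z : M.Rclass x, (z : ℝ) ∈ M.Ipart i ∧ M.F i z = M.e x := by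
  obtain ⟨z, hzi, hzF⟩ := Epart_subset_image_of_ahat hM hi hk hai hex
  exact ⟨⟨z, mem_Rclass_of_F_mem hM hx hi hzi (hzF ▸ mem_Rclass_e hM hx)⟩, hzi, hzF⟩

lemma exists_F_mem_dom (hM : IsMarkov M) (hx : x ∈ M.Esc) {i : ℕ} (hi : i < n) {z : ℝ}
    (hz : z ∈ M.Rclass x) (hzd : z ∈ M.dom) :
    ∃ y : M.Rclass x, (y : ℝ) ∈ M.Ipart i ∧ M.F i y ∈ M.dom := by
  obtain ⟨q, hq⟩ := hM.aperiodic i hi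
  have hq0 : q ≠ 0 := by
    rintro rfl
    have : (M.Ipart i).OrdConnected := ordConnected_Icc
    have hitv : M.itv ⊆ M.Ipart i := M.itv_subset_of_dom_subset hq
    exact e_notMem_dom hx (M.Ipart_subset_dom hi (hitv (e_mem_itv hM hx)))
  obtain ⟨y, hyi, hyd, hyz⟩ := exists_of_mem_iterImage (hq hzd)
  have hyR : y ∈ M.Rclass x := ⟨M.Ipart_subset_itv hi hyi, hz.2.of_iterate hyd hyz⟩
  have hfy : M.f y ∈ M.dom := definedUpTo_add hyd (definedUpTo_one (hyz ▸ hzd)) 1 (by omega)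
  exact ⟨⟨y, hyR⟩, hyi, f_eq_F hM hi hyi (notMem_Gamma_of_mem_Rclass hM hx hyR) ▸ hfy⟩

end Operators

end MarkovSystem

/-- Gap projection identity of Theorem 3.2(1b): if `â_{i,ι(x)} = 1`, then
`P_i − ∑_{j : a_{ij}=1} S_{ij} S_{ij}* = T_i P_{e(x)} T_i*`, the rank-one
orthogonal projection onto `ℂ δ_z` with `z = (f|_{I_i})⁻¹(e(x))`; in particular
the gap projection is nonzero, and `∑_{j : a_{ij}=1} S_{ij} S_{ij}* ≠ 0`. -/
theorem gap_projection_identity {n : ℕ} (M : MarkovSystem n) (hM : IsMarkov M)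
    {x : ℝ} (hx : x ∈ M.Esc) {j0 : ℕ} (hj0 : 1 ≤ j0 ∧ j0 < n)
    (hex : M.e x ∈ M.Epart j0) {i : ℕ} (hi : i < n) (hai : M.ahat i j0)
    (T : ℕ → (M.Hsp x →L[ℂ] M.Hsp x)) (hT : ∀ i < n, M.IsBranchOp x i (T i))
    (Pe : M.Hsp x →L[ℂ] M.Hsp x) (hPe : M.IsEscProj x Pe) :
    T i * star (T i) -
      (∑ j ∈ Finset.range n, if M.trans i j then
        (T i * (T j * star (T j))) * star (T i * (T j * star (T j))) else 0) =
      T i * Pe * star (T i) ∧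
    (∃ z : M.Rclass x, (z : ℝ) ∈ M.Ipart i ∧ M.F i z = M.e x ∧
      ∀ w : M.Rclass x, (T i * Pe * star (T i)) (M.dvec w) =
        if w = z then M.dvec z else 0) ∧
    T i * Pe * star (T i) ≠ 0 ∧
    (∑ j ∈ Finset.range n, if M.trans i j then
      (T i * (T j * star (T j))) * star (T i * (T j * star (T j))) else 0) ≠ 0 := by
  have hP := (hT i hi).isCoordProj_mul_star hM hx hi
  have hS := MarkovSystem.isCoordProj_sum_trans hM hx hi hT
  have hG : MarkovSystem.IsCoordProj (T i * Pe * star (T i)) (M.Ipart i ∩ M.F i ⁻¹' {M.e x}) :=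
    (hT i hi).isCoordProj_conj hM hx hi hPe
  obtain ⟨z, hzi, hzF⟩ := MarkovSystem.exists_F_eq_e hM hx hi hj0.2.le hex hai
  obtain ⟨y, hyi, hyF⟩ := MarkovSystem.exists_F_mem_dom hM hx hi z.2 (M.Ipart_subset_dom hi hzi)
  have hz : ∀ w : M.Rclass x, (w : ℝ) ∈ M.Ipart i ∩ M.F i ⁻¹' {M.e x} ↔ w = z := fun w =>
    ⟨fun hw => Subtype.ext (MarkovSystem.F_injOn hM hi hw.1 hzi (hw.2.trans hzF.symm)),
      fun hwz => hwz ▸ ⟨hzi, hzF⟩⟩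
  exact ⟨((hP.sub hS Set.inter_subset_left).congr fun v hv =>
      MarkovSystem.mem_Ipart_sdiff_iff hM hx hi hv).eq hG,
    ⟨z, hzi, hzF, hG.apply_eq_ite hz⟩, hG.ne_zero z ⟨hzi, hzF⟩, hS.ne_zero y ⟨hyi, hyF⟩⟩
end
end

section
/- (Existence of interval maps with prescribed escape column, cf. Corollary 3.5(2).) For every n ≥ 2 and every nonzero vector u = (u_1,…,u_n) ∈ {0,1}^n, there exists a choice of partition points and a Markov interval map f on the corresponding interval I having exactly one nonempty escape interval E_k, such that for every i ∈ {1,…,n}: int I_i ∩ f^{-1}(E_k) ≠ ∅ if and only if u_i = 1 (that is, the escape transition matrix of f has a single escape column, equal to u). -/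
open scoped Classical ENNReal

noncomputable section

/-!
Choose `t` with `u t = true`. Take Markov intervals of length `1`, except `I_t` of length `2`,
separated by the single gap `E_1`, and let every branch be affine and decreasing: onto `I` when
`u i`, onto `I_t` otherwise. The branches onto `I` cross `E_1` and those onto `I_t` miss it, which
gives the prescribed column. Every slope is at least `2` because `I_t` is the longest Markov
interval and `I` is longer still, and every `I_i` covers `I` after four steps by passing
through `I_t`.
-/

open Set

namespace MarkovSystem

variable {n : ℕ} (M : MarkovSystem n)

lemma cp_lt_cm_of_lt_s17 {j k : ℕ} (hjk : j < k) (hk : k ≤ n) : M.cp j < M.cm k := by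
  induction k, hjk using Nat.le_induction with
  | base => exact M.cp_lt_cm j (by omega)
  | succ k hjk ih =>
    calc M.cp j < M.cm k := ih (by omega)
      _ ≤ M.cp k := M.cm_le_cp k (by omega)
      _ < M.cm (k + 1) := M.cp_lt_cm k (by omega)

lemma cm_le_cm_s17 {j k : ℕ} (hjk : j ≤ k) (hk : k ≤ n) : M.cm j ≤ M.cm k := by
  rcases hjk.eq_or_lt with rfl | hjk
  · exact le_rfl
  · exact (M.cm_le_cp j (by omega)).trans (M.cp_lt_cm_of_lt_s17 hjk hk).le

lemma cp_le_cp_s17 {j k : ℕ} (hjk : j ≤ k) (hk : k ≤ n) : M.cp j ≤ M.cp k := by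
  rcases hjk.eq_or_lt with rfl | hjk
  · exact le_rfl
  · exact (M.cp_lt_cm_of_lt_s17 hjk hk).le.trans (M.cm_le_cp k hk)

lemma cm_zero_lt_cm_n : M.cm 0 < M.cm n :=
  M.cm_zero ▸ M.cp_lt_cm_of_lt_s17 (by have := M.two_le; omega) le_rfl

lemma cm_zero_lt_cp_or_cm_succ_lt_cm_n {t : ℕ} (ht : t < n) :
    M.cm 0 < M.cp t ∨ M.cm (t + 1) < M.cm n := by
  rcases Nat.eq_zero_or_pos t with rfl | ht₀
  · exact Or.inr ((M.cm_le_cp 1 (by omega)).trans_lt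
      (M.cp_lt_cm_of_lt_s17 (by have := M.two_le; omega) le_rfl))
  · exact Or.inl (M.cm_zero ▸ (M.cp_lt_cm_of_lt_s17 ht₀ ht.le).trans_le (M.cm_le_cp t ht.le))

lemma dom_subset_itv : M.dom ⊆ M.itv :=
  iUnion₂_subset fun _ hj => M.Ipart_subset_itv (Finset.mem_range.1 hj)

lemma Epart_subset_Ioo {k : ℕ} (hk : 1 ≤ k) (hkn : k < n) :
    M.Epart k ⊆ Ioo (M.cm 0) (M.cm n) :=
  Ioo_subset_Ioo (M.cm_zero ▸ (M.cp_lt_cm_of_lt_s17 hk hkn.le).le)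
    (M.cp_lt_cm_of_lt_s17 hkn le_rfl).le

lemma disjoint_Ipart_Epart {j k : ℕ} (hj : j < n) (hk : k ≤ n) :
    Disjoint (M.Ipart j) (M.Epart k) := by
  refine disjoint_left.2 fun x hxI hxE => ?_
  obtain ⟨hx₁, hx₂⟩ := hxI
  obtain ⟨hx₃, hx₄⟩ := hxE
  rcases lt_or_ge j k with hjk | hkj
  · linarith [M.cm_le_cm_s17 (Nat.succ_le_of_lt hjk) hk]
  · linarith [M.cp_le_cp_s17 hkj hj.le]

lemma notMem_Ipart_of_mem_interior {i k : ℕ} {x : ℝ} (hx : x ∈ interior (M.Ipart i))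
    (hi : i < n) (hk : k < n) (hki : k ≠ i) : x ∉ M.Ipart k := by
  rw [Ipart, interior_Icc] at hx
  rintro ⟨hx₁, hx₂⟩
  rcases hki.lt_or_gt with hki | hik
  · linarith [hx.1, M.cm_le_cm_s17 (Nat.succ_le_of_lt hki) hi.le, M.cm_le_cp i hi.le]
  · linarith [hx.2, M.cm_le_cm_s17 (Nat.succ_le_of_lt hik) hk.le, M.cm_le_cp k hk.le]

lemma itv_eq_iUnion_Ipart_union_iUnion_Epart :
    M.itv = (⋃ j ∈ {j | j < n}, M.Ipart j) ∪ ⋃ j ∈ {j | 1 ≤ j ∧ j < n}, M.Epart j := by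
  refine subset_antisymm (fun x ⟨hx₀, hxn⟩ => ?_) (union_subset
    (iUnion₂_subset fun j hj => M.Ipart_subset_itv hj)
    (iUnion₂_subset fun j hj => (M.Epart_subset_Ioo hj.1 hj.2).trans Ioo_subset_Icc_self))
  simp only [mem_union, mem_iUnion, mem_ofPred_eq, exists_prop]
  set j := Nat.findGreatest (fun j => M.cp j ≤ x) n
  have hj : M.cp j ≤ x := Nat.findGreatest_spec (P := fun j => M.cp j ≤ x) (Nat.zero_le n)
    (by rwa [← M.cm_zero])
  have hjle : j ≤ n := Nat.findGreatest_le n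
  rcases hjle.eq_or_lt with hjn | hjn
  · have hn : n - 1 + 1 = n := by have := M.two_le; omega
    rw [hjn] at hj
    exact Or.inl ⟨n - 1, by omega, (M.cp_le_cp_s17 (by omega) le_rfl).trans hj, by
      rw [hn]; exact hxn⟩
  · have hx : x < M.cp (j + 1) :=
      not_le.1 (Nat.findGreatest_is_greatest (P := fun j => M.cp j ≤ x) (by omega) hjn)
    by_cases hxj : x ≤ M.cm (j + 1)
    · exact Or.inl ⟨j, hjn, hj, hxj⟩
    · refine Or.inr ⟨j + 1, ⟨by omega, ?_⟩, not_le.1 hxj, hx⟩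
      by_contra hjn'
      have : j + 1 = n := by omega
      rw [this, M.cm_n] at hxj
      exact hxj (this ▸ hx).le

lemma image_subset_iterImage_succ {S T : Set ℝ} {q : ℕ} (hT : T ⊆ M.iterImage q S)
    (hdom : T ⊆ M.dom) : M.f '' T ⊆ M.iterImage (q + 1) S :=
  image_mono (subset_inter hT hdom)

end MarkovSystem

def decreasingAffine (a b c d x : ℝ) : ℝ := d - (d - c) / (b - a) * (x - a)

section DecreasingAffine

variable {a b c d : ℝ}

lemma hasDerivAt_decreasingAffine (x : ℝ) :
    HasDerivAt (decreasingAffine a b c d) (-((d - c) / (b - a))) x := by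
  have h := (((hasDerivAt_id x).sub_const a).const_mul ((d - c) / (b - a))).const_sub d
  rw [mul_one] at h
  exact h

lemma continuous_decreasingAffine : Continuous (decreasingAffine a b c d) := by
  unfold decreasingAffine; fun_prop

lemma strictAnti_decreasingAffine (hab : a < b) (hcd : c < d) :
    StrictAnti (decreasingAffine a b c d) := fun x y hxy => by
  have : 0 < (d - c) / (b - a) := div_pos (by linarith) (by linarith)
  unfold decreasingAffine
  nlinarith

lemma decreasingAffine_left : decreasingAffine a b c d a = d := by
  simp [decreasingAffine]

lemma decreasingAffine_right (hab : a < b) : decreasingAffine a b c d b = c := by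
  have : b - a ≠ 0 := by linarith
  simp only [decreasingAffine]
  field_simp
  ring

lemma image_decreasingAffine_Icc (hab : a < b) (hcd : c < d) :
    decreasingAffine a b c d '' Icc a b = Icc c d := by
  rw [continuous_decreasingAffine.continuousOn.image_Icc_of_antitoneOn hab.le
    ((strictAnti_decreasingAffine hab hcd).antitone.antitoneOn _), decreasingAffine_left,
    decreasingAffine_right hab]

lemma image_decreasingAffine_Ioo (hab : a < b) (hcd : c < d) :
    decreasingAffine a b c d '' Ioo a b = Ioo c d := by
  rw [continuous_decreasingAffine.continuousOn.image_Ioo_of_strictAntiOn hab.le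
    ((strictAnti_decreasingAffine hab hcd).strictAntiOn _), decreasingAffine_left,
    decreasingAffine_right hab]

end DecreasingAffine

lemma Icc_subset_image_Icc_inter_Ioo {F : ℝ → ℝ} {a b c d : ℝ}
    (hF : Icc c d ⊆ F '' Icc a b) (hFa : F a = d) (hFb : F b = c) (hca : c ≤ a) (hbd : b ≤ d)
    (hproper : c < a ∨ b < d) : Icc a b ⊆ F '' (Icc a b ∩ Ioo c d) := by
  intro y hy
  obtain ⟨x, hx, rfl⟩ := hF ⟨hca.trans hy.1, hy.2.trans hbd⟩
  refine ⟨x, ⟨hx, lt_of_le_of_ne (hca.trans hx.1) ?_, lt_of_le_of_ne (hx.2.trans hbd) ?_⟩, rfl⟩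
  · intro hcx
    have hxa : x = a := by linarith [hx.1]
    rw [hxa, hFa] at hy
    rcases hproper with h | h <;> linarith [hy.2]
  · intro hxd
    have hxb : x = b := by linarith [hx.2]
    rw [hxb, hFb] at hy
    rcases hproper with h | h <;> linarith [hy.1]

namespace MarkovSystem

variable {n : ℕ} (P : MarkovSystem n) (t : ℕ) (u : ℕ → Bool)

def targetLo (i : ℕ) : ℝ := if u i then P.cm 0 else P.cp t

def targetHi (i : ℕ) : ℝ := if u i then P.cm n else P.cm (t + 1)

def affineBranch (i : ℕ) : ℝ → ℝ :=
  decreasingAffine (P.cp i) (P.cm (i + 1)) (P.targetLo t u i) (P.targetHi t u i)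

def branchIndex (x : ℝ) : ℕ :=
  if x ∈ P.Ipart t then t else if h : ∃ j < n, x ∈ P.Ipart j then h.choose else t

/-- The partition of `P` with new dynamics: the branch on `I_i` is the decreasing affine map
onto `I` if `u i`, and onto `I_t` otherwise; at a point shared by two Markov intervals, `f`
follows the branch of `I_t` whenever possible. -/
def affineModel : MarkovSystem n :=
  { P with
    f := fun x => P.affineBranch t u (P.branchIndex t x) x
    F := P.affineBranch t u
    F' := fun i _ => -((P.targetHi t u i - P.targetLo t u i) / (P.cm (i + 1) - P.cp i)) }

variable {P t u}

lemma targetLo_lt_targetHi (ht : t < n) (i : ℕ) : P.targetLo t u i < P.targetHi t u i := by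
  unfold targetLo targetHi
  split_ifs
  · exact P.cm_zero_lt_cm_n
  · exact P.cp_lt_cm t ht

lemma Ioo_subset_Ioo_target (ht : t < n) (i : ℕ) :
    Ioo (P.cp t) (P.cm (t + 1)) ⊆ Ioo (P.targetLo t u i) (P.targetHi t u i) := by
  unfold targetLo targetHi
  split_ifs
  · exact Ioo_subset_Ioo (P.cm_zero ▸ P.cp_le_cp_s17 (Nat.zero_le t) ht.le) (P.cm_le_cm_s17 ht le_rfl)
  · exact subset_rfl

lemma image_affineBranch_Ipart (ht : t < n) {i : ℕ} (hi : i < n) :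
    P.affineBranch t u i '' P.Ipart i = Icc (P.targetLo t u i) (P.targetHi t u i) :=
  image_decreasingAffine_Icc (P.cp_lt_cm i hi) (targetLo_lt_targetHi ht i)

lemma image_affineBranch_interior (ht : t < n) {i : ℕ} (hi : i < n) :
    P.affineBranch t u i '' interior (P.Ipart i) = Ioo (P.targetLo t u i) (P.targetHi t u i) := by
  rw [Ipart, interior_Icc]
  exact image_decreasingAffine_Ioo (P.cp_lt_cm i hi) (targetLo_lt_targetHi ht i)

lemma image_affineBranch_Ipart_of_true (ht : t < n) {i : ℕ} (hi : i < n) (hui : u i = true) :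
    P.affineBranch t u i '' P.Ipart i = P.itv := by
  rw [image_affineBranch_Ipart ht hi]
  simp [targetLo, targetHi, hui, itv]

lemma image_affineBranch_Ipart_of_false (ht : t < n) {i : ℕ} (hi : i < n) (hui : u i = false) :
    P.affineBranch t u i '' P.Ipart i = P.Ipart t := by
  rw [image_affineBranch_Ipart ht hi]
  simp [targetLo, targetHi, hui, Ipart]

lemma image_affineBranch_interior_of_true (ht : t < n) {i : ℕ} (hi : i < n) (hui : u i = true) :
    P.affineBranch t u i '' interior (P.Ipart i) = Ioo (P.cm 0) (P.cm n) := by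
  rw [image_affineBranch_interior ht hi]
  simp [targetLo, targetHi, hui]

lemma affineModel_f_eq_of_forall_notMem (ht : t < n) {j : ℕ} (hj : j < n) {x : ℝ}
    (hx : x ∈ P.Ipart j) (hexcl : ∀ k < n, k ≠ j → x ∉ P.Ipart k) :
    (P.affineModel t u).f x = P.affineBranch t u j x := by
  show P.affineBranch t u (P.branchIndex t x) x = _
  suffices P.branchIndex t x = j by rw [this]
  unfold branchIndex
  split_ifs with hxt h
  · by_contra hne
    exact hexcl t ht hne hxt
  · by_contra hne
    exact hexcl _ h.choose_spec.1 hne h.choose_spec.2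
  · exact absurd ⟨j, hj, hx⟩ h

lemma affineModel_exists_branch (ht : t < n) {x : ℝ} (hx : x ∈ P.dom) :
    ∃ j, j < n ∧ x ∈ P.Ipart j ∧ (P.affineModel t u).f x = P.affineBranch t u j x := by
  have hx' : ∃ j < n, x ∈ P.Ipart j := by simpa [dom] using hx
  by_cases hxt : x ∈ P.Ipart t
  · exact ⟨t, ht, hxt, by simp [affineModel, branchIndex, hxt]⟩
  · exact ⟨hx'.choose, hx'.choose_spec.1, hx'.choose_spec.2,
      by simp [affineModel, branchIndex, hxt, hx']⟩

lemma affineModel_f_eqOn_Ipart : EqOn (P.affineModel t u).f (P.affineBranch t u t) (P.Ipart t) :=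
  fun x hx => by simp [affineModel, branchIndex, hx]

lemma affineModel_f_eqOn_interior (ht : t < n) {i : ℕ} (hi : i < n) :
    EqOn (P.affineModel t u).f (P.affineBranch t u i) (interior (P.Ipart i)) := fun _ hx =>
  affineModel_f_eq_of_forall_notMem ht hi (interior_subset hx)
    fun _ hk hki => P.notMem_Ipart_of_mem_interior hx hi hk hki

/-- Every branch covers the interior of `I_t`, which `f` maps onto the interior of `I`;
since `I_t ≠ I` and the branch of `I_t` reverses orientation, the interior of `I` covers
all of `I_t`, whose image is `I`. -/
lemma affineModel_aperiodic (ht : t < n) (hut : u t = true) {i : ℕ} (hi : i < n) :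
    P.dom ⊆ (P.affineModel t u).iterImage 4 (P.Ipart i) := by
  set A := P.affineModel t u
  have hFt := image_affineBranch_Ipart_of_true (P := P) ht ht hut
  have hFt' := image_affineBranch_interior_of_true (P := P) ht ht hut
  have h₁ : interior (P.Ipart t) ⊆ A.iterImage 1 (P.Ipart i) :=
    calc interior (P.Ipart t) = Ioo (P.cp t) (P.cm (t + 1)) := interior_Icc
      _ ⊆ Ioo (P.targetLo t u i) (P.targetHi t u i) := Ioo_subset_Ioo_target ht i
      _ = A.f '' interior (P.Ipart i) := by
        rw [← image_affineBranch_interior ht hi, (affineModel_f_eqOn_interior ht hi).image_eq]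
      _ ⊆ A.iterImage 1 (P.Ipart i) := A.image_subset_iterImage_succ interior_subset
        (interior_subset.trans (P.Ipart_subset_dom hi))
  have h₂ : Ioo (P.cm 0) (P.cm n) ⊆ A.iterImage 2 (P.Ipart i) := by
    rw [← hFt', ← (affineModel_f_eqOn_interior ht ht).image_eq]
    exact A.image_subset_iterImage_succ h₁ (interior_subset.trans (P.Ipart_subset_dom ht))
  have h₃ : P.Ipart t ⊆ A.iterImage 3 (P.Ipart i) := by
    have hcover := Icc_subset_image_Icc_inter_Ioo hFt.superset
      (by simp [affineBranch, decreasingAffine_left, targetHi, hut])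
      (by simp [affineBranch, decreasingAffine_right (P.cp_lt_cm t ht), targetLo, hut])
      (P.cm_zero ▸ P.cp_le_cp_s17 (Nat.zero_le t) ht.le) (P.cm_le_cm_s17 ht le_rfl)
      (P.cm_zero_lt_cp_or_cm_succ_lt_cm_n ht)
    calc P.Ipart t ⊆ P.affineBranch t u t '' (P.Ipart t ∩ Ioo (P.cm 0) (P.cm n)) := hcover
      _ = A.f '' (P.Ipart t ∩ Ioo (P.cm 0) (P.cm n)) :=
        (affineModel_f_eqOn_Ipart.mono inter_subset_left).image_eq.symm
      _ ⊆ A.iterImage 3 (P.Ipart i) := A.image_subset_iterImage_succ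
        (inter_subset_right.trans h₂) (inter_subset_left.trans (P.Ipart_subset_dom ht))
  calc P.dom ⊆ P.itv := P.dom_subset_itv
    _ = A.f '' P.Ipart t := by rw [affineModel_f_eqOn_Ipart.image_eq, hFt]
    _ ⊆ A.iterImage 4 (P.Ipart i) := A.image_subset_iterImage_succ h₃ (P.Ipart_subset_dom ht)

lemma affineModel_expansive (ht : t < n) (hut : u t = true) {b : ℝ} (hb : 1 < b)
    (hshort : ∀ i < n, i ≠ t → b * (P.cm (i + 1) - P.cp i) < P.cm (t + 1) - P.cp t)
    (hlong : b * (P.cm (t + 1) - P.cp t) < P.cm n - P.cm 0) {i : ℕ} (hi : i < n) (x : ℝ) :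
    b < |(P.affineModel t u).F' i x| := by
  have hlen : 0 < P.cm (i + 1) - P.cp i := sub_pos.2 (P.cp_lt_cm i hi)
  show b < |-((P.targetHi t u i - P.targetLo t u i) / (P.cm (i + 1) - P.cp i))|
  rw [abs_neg, abs_of_pos (div_pos (sub_pos.2 (targetLo_lt_targetHi ht i)) hlen),
    lt_div_iff₀ hlen]
  unfold targetLo targetHi
  split_ifs with hui
  · rcases eq_or_ne i t with rfl | hit
    · exact hlong
    · have := hshort i hi hit
      have := P.cp_lt_cm t ht
      nlinarith
  · exact hshort i hi (by rintro rfl; exact hui hut)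

lemma affineModel_markov (ht : t < n) {i : ℕ} (hi : i < n) :
    ∃ S T : Set ℕ, S ⊆ {j | j < n} ∧ T ⊆ {j | 1 ≤ j ∧ j < n} ∧
      P.affineBranch t u i '' P.Ipart i = (⋃ j ∈ S, P.Ipart j) ∪ (⋃ j ∈ T, P.Epart j) := by
  cases hui : u i
  · refine ⟨{t}, ∅, by simpa using ht, empty_subset _, ?_⟩
    rw [image_affineBranch_Ipart_of_false ht hi hui, biUnion_singleton, biUnion_empty,
      union_empty]
  · refine ⟨{j | j < n}, {j | 1 ≤ j ∧ j < n}, subset_rfl, subset_rfl, ?_⟩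
    rw [image_affineBranch_Ipart_of_true ht hi hui, itv_eq_iUnion_Ipart_union_iUnion_Epart]

theorem isMarkov_affineModel (ht : t < n) (hut : u t = true) {b : ℝ} (hb : 1 < b)
    (hshort : ∀ i < n, i ≠ t → b * (P.cm (i + 1) - P.cp i) < P.cm (t + 1) - P.cp t)
    (hlong : b * (P.cm (t + 1) - P.cp t) < P.cm n - P.cm 0) :
    IsMarkov (P.affineModel t u) where
  compat₁ _ hj _ hx hexcl := affineModel_f_eq_of_forall_notMem ht hj hx hexcl
  compat₂ _ hx := affineModel_exists_branch ht hx
  maps_into j hj := by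
    cases huj : u j
    · exact (image_affineBranch_Ipart_of_false ht hj huj).trans_subset (P.Ipart_subset_itv ht)
    · exact (image_affineBranch_Ipart_of_true ht hj huj).subset
  onto x hx := mem_biUnion (Finset.mem_range.2 ht)
    ((image_affineBranch_Ipart_of_true ht ht hut).symm ▸ hx)
  markov _ hi := affineModel_markov ht hi
  deriv _ _ x _ := (hasDerivAt_decreasingAffine x).hasDerivWithinAt
  derivCont _ _ := continuousOn_const
  mono i hi := Or.inr
    ((strictAnti_decreasingAffine (P.cp_lt_cm i hi) (targetLo_lt_targetHi ht i)).strictAntiOn _)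
  expansive := ⟨b, hb, fun _ hi x _ => affineModel_expansive ht hut hb hshort hlong hi x⟩
  aperiodic _ hi := ⟨4, affineModel_aperiodic ht hut hi⟩

lemma affineModel_ahat_iff (ht : t < n) {k : ℕ} (hk : 1 ≤ k) (hkn : k < n)
    (hE : (P.Epart k).Nonempty) {i : ℕ} (hi : i < n) :
    (P.affineModel t u).ahat i k ↔ u i = true := by
  rw [ahat, ← image_inter_nonempty_iff]
  cases hui : u i
  · simp only [Bool.false_eq_true, iff_false, not_nonempty_iff_eq_empty]
    refine ((P.disjoint_Ipart_Epart ht hkn.le).mono_left ?_).inter_eq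
    exact (image_mono interior_subset).trans (image_affineBranch_Ipart_of_false ht hi hui).subset
  · simp only [iff_true]
    show (P.affineBranch t u i '' interior (P.Ipart i) ∩ P.Epart k).Nonempty
    rw [image_affineBranch_interior_of_true ht hi hui]
    exact hE.mono (subset_inter (P.Epart_subset_Ioo hk hkn) subset_rfl)

end MarkovSystem

/-- Markov intervals of length `1`, except `I_t` of length `2`, and the single gap `E_1` of
length `1`; the dynamics are placeholders, to be replaced by `MarkovSystem.affineModel`. -/
def escapePartition (n t : ℕ) (hn : 2 ≤ n) : MarkovSystem n where
  cm j := j + (if 2 ≤ j then 1 else 0) + (if t < j then 1 else 0)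
  cp j := j + (if 1 ≤ j then 1 else 0) + (if t < j then 1 else 0)
  f := id
  F _ := id
  F' _ _ := 1
  two_le := hn
  cm_zero := by simp
  cm_n := by simp [show 1 ≤ n by omega, show 2 ≤ n from hn]
  cm_le_cp j _ := by split_ifs <;> first | omega | linarith
  cp_lt_cm j _ := by push_cast; split_ifs <;> first | omega | linarith

namespace escapePartition

variable {n t : ℕ} (hn : 2 ≤ n)

lemma cm_succ_sub_cp (j : ℕ) :
    (escapePartition n t hn).cm (j + 1) - (escapePartition n t hn).cp j =
      if j = t then 2 else 1 := by
  simp only [escapePartition]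
  push_cast
  split_ifs <;> first | omega | linarith

lemma cm_n_sub_cm_zero (ht : t < n) :
    (escapePartition n t hn).cm n - (escapePartition n t hn).cm 0 = n + 2 := by
  simp [escapePartition, hn, ht]
  ring

lemma Epart_one_nonempty : ((escapePartition n t hn).Epart 1).Nonempty :=
  ⟨(escapePartition n t hn).cm 1 + 1 / 2, by
    simp only [MarkovSystem.Epart, escapePartition]
    constructor <;> split_ifs <;> first | omega | norm_num⟩

lemma Epart_eq_empty {j : ℕ} (hj : j ≠ 1) : (escapePartition n t hn).Epart j = ∅ := by
  have : (escapePartition n t hn).cm j = (escapePartition n t hn).cp j := by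
    simp only [escapePartition]
    split_ifs <;> first | omega | rfl
  rw [MarkovSystem.Epart, this, Ioo_self]

end escapePartition

/-- For every `n ≥ 2` and every nonzero `0-1` vector `u`, there is a Markov
interval map with exactly one nonempty escape interval `E_k`, whose escape
transition column equals `u`: `int I_i ∩ f⁻¹(E_k) ≠ ∅` iff `u i = 1`. -/
theorem exists_markov_with_prescribed_escape_column (n : ℕ) (hn : 2 ≤ n)
    (u : ℕ → Bool) (hu : ∃ i, i < n ∧ u i = true) :
    ∃ M : MarkovSystem n, IsMarkov M ∧
      ∃ k, 1 ≤ k ∧ k < n ∧ (M.Epart k).Nonempty ∧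
        (∀ j, 1 ≤ j → j < n → j ≠ k → M.Epart j = ∅) ∧
        (∀ i < n, (M.ahat i k ↔ u i = true)) := by
  obtain ⟨t, ht, hut⟩ := hu
  set P := escapePartition n t hn
  have hshort : ∀ i < n, i ≠ t → 3 / 2 * (P.cm (i + 1) - P.cp i) < P.cm (t + 1) - P.cp t :=
    fun i _ hit => by
      simp only [P, escapePartition.cm_succ_sub_cp, if_neg hit, ↓reduceIte]
      norm_num
  have hlong : 3 / 2 * (P.cm (t + 1) - P.cp t) < P.cm n - P.cm 0 := by
    have : (2 : ℝ) ≤ n := by exact_mod_cast hn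
    simp only [P, escapePartition.cm_succ_sub_cp, ↓reduceIte,
      escapePartition.cm_n_sub_cm_zero hn ht]
    linarith
  exact ⟨P.affineModel t u, P.isMarkov_affineModel ht hut (by norm_num) hshort hlong, 1, le_rfl,
    hn, escapePartition.Epart_one_nonempty hn, fun j _ _ hj => escapePartition.Epart_eq_empty hn hj,
    fun i hi => P.affineModel_ahat_iff ht le_rfl hn (escapePartition.Epart_one_nonempty hn) hi⟩
end
end
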